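/- arXiv:2101.09636 — 2 statements merged into one kernel-verified Lean document; each statement's English description precedes it below -/
import Mathlib

section
/- Let n ≥ 0 and suppose i_m, j_m, ℓ_m ∈ [0,d] for m ∈ [0,n] with min over m of {k_{i_m}, k_{ℓ_m}} equal to 1. Then the product E_{i_0}^* A_{j_0} E_{ℓ_0}^* · E_{i_1}^* A_{j_1} E_{ℓ_1}^* ⋯ E_{i_n}^* A_{j_n} E_{ℓ_n}^* is an F-scalar multiple of E_{i_0}^* J E_{ℓ_n}^*. -/
open Matrix

/-- An association scheme of class `d` on a finite set `X`: every pair is assigned a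
relation index `r x y ∈ [0,d]`, relation `0` is the diagonal, there is a transpose
involution `inv`, each relation is attained, and the intersection numbers
`p i j ℓ = |{z : (x,z) ∈ R_i, (z,y) ∈ R_j}|` depend only on `ℓ = r x y`. -/
structure AssocScheme (X : Type*) [Fintype X] [DecidableEq X] (d : ℕ) where
  r : X → X → Fin (d + 1)
  r_diag : ∀ x y : X, r x y = 0 ↔ x = y
  inv : Fin (d + 1) → Fin (d + 1)
  r_symm : ∀ x y : X, r y x = inv (r x y)
  p : Fin (d + 1) → Fin (d + 1) → Fin (d + 1) → ℕ
  card_p : ∀ (i j : Fin (d + 1)) (x y : X),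
    (Finset.univ.filter fun z : X => r x z = i ∧ r z y = j).card = p i j (r x y)
  surj : ∀ i : Fin (d + 1), ∃ x y : X, r x y = i

namespace AssocScheme

variable {X : Type*} [Fintype X] [DecidableEq X] {d : ℕ}

/-- The valency `k_i = p_{i i'}^0` of the relation `R_i`. -/
def k (S : AssocScheme X d) (i : Fin (d + 1)) : ℕ := S.p i (S.inv i) 0

variable (F : Type*) [Field F]

/-- The adjacency matrix of the relation `R_j` over `F`. -/
def adjM (S : AssocScheme X d) (j : Fin (d + 1)) : Matrix X X F :=
  Matrix.of fun y z => if S.r y z = j then 1 else 0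

/-- The dual idempotent `E_i^*` with respect to the base point `x`. -/
def dualIdem (S : AssocScheme X d) (x : X) (i : Fin (d + 1)) : Matrix X X F :=
  Matrix.of fun y z => if y = z ∧ S.r x y = i then 1 else 0

/-- The all-one matrix `J`. -/
def Jmat : Matrix X X F := Matrix.of fun _ _ => 1

/-- The (modular) Terwilliger algebra of `S` with respect to `x`. -/
def terw (S : AssocScheme X d) (x : X) : Subalgebra F (Matrix X X F) :=
  Algebra.adjoin F (Set.range (S.adjM F) ∪ Set.range (S.dualIdem F x))

/-- The primary module `W_0 = span_F {E_i^* 𝟏 : i ∈ [0,d]}`. -/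
def W0 (S : AssocScheme X d) (x : X) : Submodule F (X → F) :=
  Submodule.span F (Set.range fun i : Fin (d + 1) => S.dualIdem F x i *ᵥ (1 : X → F))
section Helpers

variable (S : AssocScheme X d) (x : X)

lemma inv_inv' (i : Fin (d + 1)) : S.inv (S.inv i) = i := by
  obtain ⟨u, v, huv⟩ := S.surj i
  rw [← huv, ← S.r_symm, ← S.r_symm]

lemma r_inv_iff (w z : X) (c : Fin (d + 1)) : S.r w z = c ↔ S.r z w = S.inv c := by
  constructor
  · intro h; rw [S.r_symm, h]
  · intro h
    have h2 : S.r w z = S.inv (S.r z w) := S.r_symm z w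
    rw [h, S.inv_inv'] at h2
    exact h2

lemma dualIdem_eq (i : Fin (d + 1)) :
    S.dualIdem F x i = Matrix.diagonal (fun y => if S.r x y = i then (1 : F) else 0) := by
  ext y z
  simp [dualIdem, Matrix.diagonal_apply, ite_and]

lemma T_apply (a b c : Fin (d + 1)) (y z : X) :
    (S.dualIdem F x a * S.adjM F b * S.dualIdem F x c) y z =
      (if S.r x y = a then (1 : F) else 0) * (if S.r y z = b then 1 else 0) *
        (if S.r x z = c then 1 else 0) := by
  rw [S.dualIdem_eq F x a, S.dualIdem_eq F x c]
  simp [Matrix.diagonal_mul, Matrix.mul_diagonal, adjM]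

lemma EJE_apply (g e : Fin (d + 1)) (y z : X) :
    (S.dualIdem F x g * Jmat (X := X) F * S.dualIdem F x e) y z =
      (if S.r x y = g then (1 : F) else 0) * (if S.r x z = e then 1 else 0) := by
  rw [S.dualIdem_eq F x g, S.dualIdem_eq F x e]
  simp [Matrix.diagonal_mul, Matrix.mul_diagonal, Jmat]

end Helpers
section Counting

variable (S : AssocScheme X d) (x : X)

lemma sum_ind_left (y : X) (b c : Fin (d + 1)) :
    (∑ w : X, (if S.r y w = b then (1 : F) else 0) * (if S.r x w = c then 1 else 0))
      = (S.p b (S.inv c) (S.r y x) : F) := by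
  rw [← S.card_p b (S.inv c) y x]
  rw [Finset.card_filter]
  push_cast
  apply Finset.sum_congr rfl
  intro w _
  have hiff : S.r x w = c ↔ S.r w x = S.inv c := S.r_inv_iff x w c
  simp only [← hiff]
  by_cases h1 : S.r y w = b <;> by_cases h2 : S.r x w = c <;> simp [h1, h2]

lemma sum_ind_right (z : X) (a b : Fin (d + 1)) :
    (∑ w : X, (if S.r x w = a then (1 : F) else 0) * (if S.r w z = b then 1 else 0))
      = (S.p a b (S.r x z) : F) := by
  rw [← S.card_p a b x z]
  rw [Finset.card_filter]
  push_cast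
  apply Finset.sum_congr rfl
  intro w _
  by_cases h1 : S.r x w = a <;> by_cases h2 : S.r w z = b <;> simp [h1, h2]

lemma card_rel (z : X) (a : Fin (d + 1)) :
    (Finset.univ.filter fun w : X => S.r z w = a).card = S.k a := by
  have h0 : S.r z z = 0 := (S.r_diag z z).2 rfl
  have hc := S.card_p a (S.inv a) z z
  rw [h0] at hc
  rw [show S.k a = S.p a (S.inv a) 0 from rfl, ← hc]
  congr 1
  apply Finset.filter_congr
  intro w _
  constructor
  · intro h; exact ⟨h, (S.r_inv_iff z w a).1 h⟩
  · intro h; exact h.1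

end Counting
section Absorb

variable (S : AssocScheme X d) (x : X)

lemma T_mul_EJE (a b c g e : Fin (d + 1)) :
    (S.dualIdem F x a * S.adjM F b * S.dualIdem F x c) *
        (S.dualIdem F x g * Jmat (X := X) F * S.dualIdem F x e) =
      (if g = c then ((S.p b (S.inv c) (S.inv a) : ℕ) : F) else 0) •
        (S.dualIdem F x a * Jmat (X := X) F * S.dualIdem F x e) := by
  ext y z
  rw [Matrix.mul_apply]
  simp only [S.T_apply F x, S.EJE_apply F x, Matrix.smul_apply, smul_eq_mul]
  have hterm : ∀ w : X,
      ((if S.r x y = a then (1 : F) else 0) * (if S.r y w = b then 1 else 0) *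
          (if S.r x w = c then 1 else 0)) *
        ((if S.r x w = g then (1 : F) else 0) * (if S.r x z = e then 1 else 0)) =
      ((if g = c then (1 : F) else 0) * ((if S.r x y = a then (1 : F) else 0) *
          (if S.r x z = e then 1 else 0))) *
        ((if S.r y w = b then (1 : F) else 0) * (if S.r x w = c then 1 else 0)) := by
    intro w
    by_cases h1 : S.r x y = a <;> by_cases h2 : S.r y w = b <;>
      by_cases h3 : S.r x w = c <;> by_cases h4 : S.r x w = g <;>
      by_cases h5 : S.r x z = e <;> by_cases h6 : g = c <;>
      simp_all
  rw [Finset.sum_congr rfl fun w _ => hterm w, ← Finset.mul_sum,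
    S.sum_ind_left F x y b c]
  by_cases h1 : S.r x y = a
  · have hyx : S.r y x = S.inv a := by rw [S.r_symm, h1]
    rw [hyx]
    by_cases h6 : g = c <;> by_cases h5 : S.r x z = e <;> simp [h1, h5, h6]
  · simp [h1]

lemma EJE_mul_T (g e a b c : Fin (d + 1)) :
    (S.dualIdem F x g * Jmat (X := X) F * S.dualIdem F x e) *
        (S.dualIdem F x a * S.adjM F b * S.dualIdem F x c) =
      (if e = a then ((S.p a b c : ℕ) : F) else 0) •
        (S.dualIdem F x g * Jmat (X := X) F * S.dualIdem F x c) := by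
  ext y z
  rw [Matrix.mul_apply]
  simp only [S.T_apply F x, S.EJE_apply F x, Matrix.smul_apply, smul_eq_mul]
  have hterm : ∀ w : X,
      ((if S.r x y = g then (1 : F) else 0) * (if S.r x w = e then 1 else 0)) *
        ((if S.r x w = a then (1 : F) else 0) * (if S.r w z = b then 1 else 0) *
          (if S.r x z = c then 1 else 0)) =
      ((if e = a then (1 : F) else 0) * ((if S.r x y = g then (1 : F) else 0) *
          (if S.r x z = c then 1 else 0))) *
        ((if S.r x w = a then (1 : F) else 0) * (if S.r w z = b then 1 else 0)) := by
    intro w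
    by_cases h1 : S.r x y = g <;> by_cases h2 : S.r x w = e <;>
      by_cases h3 : S.r x w = a <;> by_cases h4 : S.r w z = b <;>
      by_cases h5 : S.r x z = c <;> by_cases h6 : e = a <;>
      simp_all
  rw [Finset.sum_congr rfl fun w _ => hterm w, ← Finset.mul_sum,
    S.sum_ind_right F x z a b]
  by_cases h5 : S.r x z = c
  · rw [h5]
    by_cases h6 : e = a <;> by_cases h1 : S.r x y = g <;> simp [h1, h5, h6]
  · simp [h5]

end Absorb
section Thin

variable (S : AssocScheme X d) (x : X)

lemma filter_rel_eq_singleton {a : Fin (d + 1)} (hka : S.k a = 1) {y : X}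
    (hy : S.r x y = a) : (Finset.univ.filter fun w : X => S.r x w = a) = {y} := by
  have hcard : (Finset.univ.filter fun w : X => S.r x w = a).card = 1 := by
    rw [S.card_rel x a, hka]
  obtain ⟨w0, hw0⟩ := Finset.card_eq_one.mp hcard
  have hmem : y ∈ (Finset.univ.filter fun w : X => S.r x w = a) :=
    Finset.mem_filter.mpr ⟨Finset.mem_univ y, hy⟩
  rw [hw0] at hmem
  rw [Finset.mem_singleton] at hmem
  rw [hw0, hmem]

lemma thin_T (a b c : Fin (d + 1)) (h : min (S.k a) (S.k c) = 1) :
    ∃ t : F, S.dualIdem F x a * S.adjM F b * S.dualIdem F x c =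
      t • (S.dualIdem F x a * Jmat (X := X) F * S.dualIdem F x c) := by
  rcases min_eq_iff.mp h with ⟨hka, _⟩ | ⟨hkc, _⟩
  · -- k a = 1
    refine ⟨((S.p a b c : ℕ) : F), ?_⟩
    ext y z
    rw [S.T_apply F x, Matrix.smul_apply, S.EJE_apply F x, smul_eq_mul]
    by_cases h1 : S.r x y = a
    · by_cases h2 : S.r x z = c
      · have key : (if S.r y z = b then (1 : F) else 0) = ((S.p a b c : ℕ) : F) := by
          have hc := S.card_p a b x z
          rw [h2] at hc
          rw [← hc, ← Finset.filter_filter, S.filter_rel_eq_singleton x hka h1,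
            Finset.filter_singleton]
          by_cases h3 : S.r y z = b <;> simp [h3]
        rw [← key]; simp [h1, h2]
      · simp [h2]
    · simp [h1]
  · -- k c = 1
    refine ⟨((S.p b (S.inv c) (S.inv a) : ℕ) : F), ?_⟩
    ext y z
    rw [S.T_apply F x, Matrix.smul_apply, S.EJE_apply F x, smul_eq_mul]
    by_cases h1 : S.r x y = a
    · by_cases h2 : S.r x z = c
      · have key : (if S.r y z = b then (1 : F) else 0)
            = ((S.p b (S.inv c) (S.inv a) : ℕ) : F) := by
          have hc := S.card_p b (S.inv c) y x
          have hyx : S.r y x = S.inv a := by rw [S.r_symm, h1]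
          rw [hyx] at hc
          have hfil : (Finset.univ.filter fun w : X => S.r y w = b ∧ S.r w x = S.inv c)
              = (Finset.univ.filter fun w : X => S.r x w = c).filter
                  fun w => S.r y w = b := by
            rw [Finset.filter_filter]
            apply Finset.filter_congr
            intro w _
            constructor
            · intro hh; exact ⟨(S.r_inv_iff x w c).2 hh.2, hh.1⟩
            · intro hh; exact ⟨hh.2, (S.r_inv_iff x w c).1 hh.1⟩
          rw [hfil, S.filter_rel_eq_singleton x hkc h2, Finset.filter_singleton] at hc
          rw [← hc]
          by_cases h3 : S.r y z = b <;> simp [h3]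
        rw [← key]; simp [h1, h2]
      · simp [h2]
    · simp [h1]

end Thin
section Fold

variable (S : AssocScheme X d) (x : X)

lemma EJE_mul_prod (n : ℕ) (a b c : Fin (n + 1) → Fin (d + 1)) (g e : Fin (d + 1)) :
    ∃ t : F, (S.dualIdem F x g * Jmat (X := X) F * S.dualIdem F x e) *
        (List.ofFn fun m : Fin (n + 1) =>
          S.dualIdem F x (a m) * S.adjM F (b m) * S.dualIdem F x (c m)).prod =
      t • (S.dualIdem F x g * Jmat (X := X) F * S.dualIdem F x (c (Fin.last n))) := by
  induction n generalizing e with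
  | zero =>
    refine ⟨if e = a 0 then ((S.p (a 0) (b 0) (c 0) : ℕ) : F) else 0, ?_⟩
    simp only [List.ofFn_succ, List.ofFn_zero, List.prod_cons, List.prod_nil, mul_one]
    rw [S.EJE_mul_T F x g e (a 0) (b 0) (c 0)]
    rfl
  | succ n ih =>
    obtain ⟨t1, ht1⟩ := ih (fun m => a m.succ) (fun m => b m.succ) (fun m => c m.succ) (c 0)
    refine ⟨(if e = a 0 then ((S.p (a 0) (b 0) (c 0) : ℕ) : F) else 0) * t1, ?_⟩
    rw [List.ofFn_succ, List.prod_cons, ← mul_assoc, S.EJE_mul_T F x g e (a 0) (b 0) (c 0),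
      Matrix.smul_mul, ht1, smul_smul]
    congr 2

lemma prod_mul_EJE (n : ℕ) (a b c : Fin (n + 1) → Fin (d + 1)) (g e : Fin (d + 1)) :
    ∃ t : F, (List.ofFn fun m : Fin (n + 1) =>
          S.dualIdem F x (a m) * S.adjM F (b m) * S.dualIdem F x (c m)).prod *
        (S.dualIdem F x g * Jmat (X := X) F * S.dualIdem F x e) =
      t • (S.dualIdem F x (a 0) * Jmat (X := X) F * S.dualIdem F x e) := by
  induction n with
  | zero =>
    refine ⟨if g = c 0 then ((S.p (b 0) (S.inv (c 0)) (S.inv (a 0)) : ℕ) : F) else 0, ?_⟩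
    simp only [List.ofFn_succ, List.ofFn_zero, List.prod_cons, List.prod_nil, mul_one]
    rw [S.T_mul_EJE F x (a 0) (b 0) (c 0) g e]
  | succ n ih =>
    obtain ⟨t1, ht1⟩ := ih (fun m => a m.succ) (fun m => b m.succ) (fun m => c m.succ)
    refine ⟨t1 * (if a (0 : Fin (n + 1)).succ = c 0 then
      ((S.p (b 0) (S.inv (c 0)) (S.inv (a 0)) : ℕ) : F) else 0), ?_⟩
    rw [List.ofFn_succ, List.prod_cons, mul_assoc, ht1, Matrix.mul_smul,
      S.T_mul_EJE F x (a 0) (b 0) (c 0) (a (0 : Fin (n + 1)).succ) e, smul_smul]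

end Fold
theorem thin_chain_product_smul_J (p : ℕ) [Fact p.Prime] [CharP F p]
    (S : AssocScheme X d) (x : X) (n : ℕ) (a b c : Fin (n + 1) → Fin (d + 1))
    (h : ∃ m : Fin (n + 1), min (S.k (a m)) (S.k (c m)) = 1) :
    ∃ t : F,
      (List.ofFn fun m : Fin (n + 1) =>
          S.dualIdem F x (a m) * S.adjM F (b m) * S.dualIdem F x (c m)).prod =
        t • (S.dualIdem F x (a 0) * Jmat F * S.dualIdem F x (c (Fin.last n))) := by
  induction n with
  | zero =>
    obtain ⟨m, hm⟩ := h
    have hm0 : m = 0 := Fin.fin_one_eq_zero m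
    rw [hm0] at hm
    obtain ⟨t, ht⟩ := S.thin_T F x (a 0) (b 0) (c 0) hm
    refine ⟨t, ?_⟩
    simp only [List.ofFn_succ, List.ofFn_zero, List.prod_cons, List.prod_nil, mul_one]
    exact ht
  | succ n ih =>
    obtain ⟨m, hm⟩ := h
    rcases Fin.eq_zero_or_eq_succ m with hm0 | ⟨i, hmi⟩
    · rw [hm0] at hm
      obtain ⟨t0, ht0⟩ := S.thin_T F x (a 0) (b 0) (c 0) hm
      obtain ⟨t1, ht1⟩ := S.EJE_mul_prod F x n (fun m => a m.succ) (fun m => b m.succ)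
        (fun m => c m.succ) (a 0) (c 0)
      refine ⟨t0 * t1, ?_⟩
      rw [List.ofFn_succ, List.prod_cons, ht0, Matrix.smul_mul, ht1, smul_smul]
      congr 2
    · obtain ⟨t1, ht1⟩ := ih (fun m => a m.succ) (fun m => b m.succ) (fun m => c m.succ)
        ⟨i, by rw [hmi] at hm; exact hm⟩
      refine ⟨t1 * (if a (0 : Fin (n + 1)).succ = c 0 then
        ((S.p (b 0) (S.inv (c 0)) (S.inv (a 0)) : ℕ) : F) else 0), ?_⟩
      rw [List.ofFn_succ, List.prod_cons, ht1, Matrix.mul_smul,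
        S.T_mul_EJE F x (a 0) (b 0) (c 0) (a (0 : Fin (n + 1)).succ) (c (Fin.last n).succ),
        smul_smul]
      congr 2
end AssocScheme
end

section
/- S is a p'-valenced scheme if and only if the primary module W_0 is self-contragredient as a T-module, i.e., W_0 ≅ Hom_F(W_0, F) where Z ∈ T acts on a functional ψ by (Zψ)(u) = ψ(Zᵗ u). -/
open Matrix

namespace AssocScheme

variable {X : Type*} [Fintype X] [DecidableEq X] {d : ℕ}

variable (F : Type*) [Field F]

variable {F}

lemma r_self (S : AssocScheme X d) (y : X) : S.r y y = 0 := (S.r_diag y y).mpr rfl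

lemma card_sphere (S : AssocScheme X d) (i : Fin (d + 1)) (y : X) :
    (Finset.univ.filter fun z : X => S.r y z = i).card = S.k i := by
  have h := S.card_p i (S.inv i) y y
  rw [S.r_self y] at h
  rw [show S.k i = S.p i (S.inv i) 0 from rfl, ← h]
  congr 1
  ext z
  simp only [Finset.mem_filter, Finset.mem_univ, true_and]
  constructor
  · intro hz; exact ⟨hz, by rw [S.r_symm, hz]⟩
  · exact fun hz => hz.1

lemma k_pos (S : AssocScheme X d) (i : Fin (d + 1)) : 0 < S.k i := by
  obtain ⟨a, b, hab⟩ := S.surj i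
  rw [← S.card_sphere i a]
  exact Finset.card_pos.mpr ⟨b, by simp [hab]⟩

lemma exists_sphere (S : AssocScheme X d) (i : Fin (d + 1)) (y : X) :
    ∃ z, S.r y z = i := by
  have hpos : 0 < (Finset.univ.filter fun z : X => S.r y z = i).card := by
    rw [S.card_sphere i y]; exact S.k_pos i
  obtain ⟨z, hz⟩ := Finset.card_pos.mp hpos
  exact ⟨z, (Finset.mem_filter.mp hz).2⟩

lemma k_zero (S : AssocScheme X d) (x : X) : S.k 0 = 1 := by
  rw [← S.card_sphere 0 x]
  rw [show (Finset.univ.filter fun z : X => S.r x z = 0) = {x} by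
    ext z; simp [S.r_diag, eq_comm]]
  simp

lemma vvec_apply (S : AssocScheme X d) (x : X) (i : Fin (d + 1)) (y : X) :
    (S.dualIdem F x i *ᵥ (1 : X → F)) y = if S.r x y = i then 1 else 0 := by
  simp only [mulVec, dotProduct, dualIdem, of_apply, Pi.one_apply, mul_one, ite_and]
  rw [Finset.sum_ite_eq]
  simp

lemma dual_mulVec (S : AssocScheme X d) (x : X) (j : Fin (d + 1)) (u : X → F) (y : X) :
    (S.dualIdem F x j *ᵥ u) y = if S.r x y = j then u y else 0 := by
  simp only [mulVec, dotProduct, dualIdem, of_apply, ite_and, ite_mul, zero_mul]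
  rw [Finset.sum_ite_eq]
  simp

lemma dual_transpose (S : AssocScheme X d) (x : X) (j : Fin (d + 1)) :
    (S.dualIdem F x j : Matrix X X F)ᵀ = S.dualIdem F x j := by
  ext y z
  simp only [transpose_apply, dualIdem, of_apply]
  rcases eq_or_ne y z with rfl | h
  · rfl
  · simp [h, h.symm]

lemma one_eq_sum (S : AssocScheme X d) (x : X) :
    (1 : X → F) = ∑ i : Fin (d + 1), S.dualIdem F x i *ᵥ (1 : X → F) := by
  funext y
  simp only [Finset.sum_apply, vvec_apply, Pi.one_apply]
  rw [Finset.sum_ite_eq]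
  simp

lemma vvec_mem (S : AssocScheme X d) (x : X) (i : Fin (d + 1)) :
    S.dualIdem F x i *ᵥ (1 : X → F) ∈ S.W0 F x :=
  Submodule.subset_span ⟨i, rfl⟩

lemma one_mem (S : AssocScheme X d) (x : X) : (1 : X → F) ∈ S.W0 F x := by
  rw [S.one_eq_sum x]
  exact Submodule.sum_mem _ fun i _ => S.vvec_mem x i

lemma Jmat_eq_sum (S : AssocScheme X d) :
    (Jmat F : Matrix X X F) = ∑ j : Fin (d + 1), S.adjM F j := by
  ext y z
  simp only [Jmat, of_apply, Matrix.sum_apply, adjM]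
  rw [Finset.sum_ite_eq]
  simp

lemma Jmat_mem (S : AssocScheme X d) (x : X) : (Jmat F : Matrix X X F) ∈ S.terw F x := by
  rw [S.Jmat_eq_sum]
  exact Subalgebra.sum_mem _ fun j _ =>
    Algebra.subset_adjoin (Set.mem_union_left _ ⟨j, rfl⟩)

lemma dual_mem (S : AssocScheme X d) (x : X) (j : Fin (d + 1)) :
    S.dualIdem F x j ∈ S.terw F x :=
  Algebra.subset_adjoin (Set.mem_union_right _ ⟨j, rfl⟩)

lemma Jmat_transpose : (Jmat F : Matrix X X F)ᵀ = Jmat F := rfl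

lemma Jmat_mulVec_vvec (S : AssocScheme X d) (x : X) (i : Fin (d + 1)) :
    (Jmat F : Matrix X X F) *ᵥ (S.dualIdem F x i *ᵥ (1 : X → F))
      = (S.k i : F) • (1 : X → F) := by
  funext y
  have hs : ((Jmat F : Matrix X X F) *ᵥ (S.dualIdem F x i *ᵥ (1 : X → F))) y
      = ∑ z, (if S.r x z = i then (1 : F) else 0) := by
    rw [mulVec, dotProduct]
    refine Finset.sum_congr rfl fun z _ => ?_
    rw [S.vvec_apply]
    exact one_mul _
  rw [hs, Finset.sum_boole, ← S.card_sphere i x]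
  simp

lemma dot_vvec (S : AssocScheme X d) (x : X) (i j : Fin (d + 1)) :
    (S.dualIdem F x i *ᵥ (1 : X → F)) ⬝ᵥ (S.dualIdem F x j *ᵥ (1 : X → F))
      = if i = j then (S.k i : F) else 0 := by
  simp only [dotProduct, vvec_apply]
  have hz : ∀ z : X, (if S.r x z = i then (1 : F) else 0) * (if S.r x z = j then 1 else 0)
      = if S.r x z = i ∧ S.r x z = j then 1 else 0 := by
    intro z
    by_cases h1 : S.r x z = i <;> by_cases h2 : S.r x z = j <;> simp [h1, h2]
  rw [Finset.sum_congr rfl fun z _ => hz z]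
  rcases eq_or_ne i j with rfl | h
  · simp only [and_self, if_pos rfl]
    rw [Finset.sum_boole, ← S.card_sphere i x]
    simp
  · have : ∀ z : X, ¬(S.r x z = i ∧ S.r x z = j) := fun z hc => h (hc.1 ▸ hc.2)
    simp [this, h]

lemma key_dot (S : AssocScheme X d) (x : X) (u : X → F) (hu : u ∈ S.W0 F x) (y : X) :
    (S.k (S.r x y) : F) * u y = u ⬝ᵥ (S.dualIdem F x (S.r x y) *ᵥ (1 : X → F)) := by
  induction hu using Submodule.span_induction with
  | mem w hw =>
      obtain ⟨j, rfl⟩ := hw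
      show (S.k (S.r x y) : F) * (S.dualIdem F x j *ᵥ (1 : X → F)) y
        = (S.dualIdem F x j *ᵥ (1 : X → F)) ⬝ᵥ (S.dualIdem F x (S.r x y) *ᵥ (1 : X → F))
      rw [S.dot_vvec x j (S.r x y), S.vvec_apply]
      rcases eq_or_ne (S.r x y) j with h | h
      · simp [h]
      · simp [h, Ne.symm h]
  | zero => simp
  | add w₁ w₂ _ _ h1 h2 => simp only [Pi.add_apply, add_dotProduct, mul_add, h1, h2]
  | smul c w _ h1 =>
      simp only [Pi.smul_apply, smul_dotProduct, smul_eq_mul]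
      rw [← h1]; ring

/-- `S` is `p'`-valenced iff `W_0` is self-contragredient.  A `T`-isomorphism
`W_0 ≅ W_0°` (where `(Zψ)(u) = ψ(Zᵗu)`) is encoded as a bilinear form `B` on `F^X`
which, on `W_0`, is nondegenerate in the first argument and satisfies
`B (Z u) v = B u (Zᵗ v)` for all `Z ∈ T`. -/
theorem pprime_valenced_iff_selfContragredient (p : ℕ) [Fact p.Prime] [CharP F p]
    (S : AssocScheme X d) (x : X) :
    (∀ i : Fin (d + 1), ¬ p ∣ S.k i) ↔
      ∃ B : (X → F) →ₗ[F] (X → F) →ₗ[F] F,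
        (∀ Z ∈ S.terw F x, ∀ u ∈ S.W0 F x, ∀ v ∈ S.W0 F x,
          B (Z *ᵥ u) v = B u (Zᵀ *ᵥ v)) ∧
        (∀ u ∈ S.W0 F x, (∀ v ∈ S.W0 F x, B u v = 0) → u = 0) := by
  constructor
  · intro hp
    refine ⟨LinearMap.mk₂ F (fun u v => u ⬝ᵥ v)
      (fun u u' v => add_dotProduct u u' v) (fun c u v => smul_dotProduct c u v)
      (fun u v v' => dotProduct_add u v v') (fun c u v => dotProduct_smul c u v), ?_, ?_⟩
    · intro Z _ u _ v _
      simp only [LinearMap.mk₂_apply]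
      calc (Z *ᵥ u) ⬝ᵥ v = v ⬝ᵥ (Z *ᵥ u) := dotProduct_comm _ _
        _ = (v ᵥ* Z) ⬝ᵥ u := dotProduct_mulVec _ _ _
        _ = (Zᵀ *ᵥ v) ⬝ᵥ u := by rw [mulVec_transpose]
        _ = u ⬝ᵥ (Zᵀ *ᵥ v) := dotProduct_comm _ _
    · intro u hu h0
      funext y
      have h1 := S.key_dot x u hu y
      have h2 := h0 _ (S.vvec_mem x (S.r x y))
      simp only [LinearMap.mk₂_apply] at h2
      rw [h2] at h1
      have hk : (S.k (S.r x y) : F) ≠ 0 := by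
        intro hc
        exact hp _ ((CharP.cast_eq_zero_iff F p _).mp hc)
      have := mul_eq_zero.mp h1
      simp only [Pi.zero_apply]
      tauto
  · rintro ⟨B, hEq, hnd⟩ i hdvd
    have hki : (S.k i : F) = 0 := (CharP.cast_eq_zero_iff F p _).mpr hdvd
    have h1 : B (S.dualIdem F x i *ᵥ (1 : X → F)) 1 = 0 := by
      have h := hEq (Jmat F) (S.Jmat_mem x) (S.dualIdem F x i *ᵥ (1 : X → F))
        (S.vvec_mem x i) (S.dualIdem F x 0 *ᵥ (1 : X → F)) (S.vvec_mem x 0)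
      rw [S.Jmat_mulVec_vvec x i, hki, zero_smul, map_zero, LinearMap.zero_apply,
        Jmat_transpose, S.Jmat_mulVec_vvec x 0, S.k_zero x, Nat.cast_one, one_smul] at h
      exact h.symm
    have hj : ∀ j, B (S.dualIdem F x i *ᵥ (1 : X → F)) (S.dualIdem F x j *ᵥ (1 : X → F)) = 0 := by
      intro j
      have h := hEq (S.dualIdem F x j) (S.dual_mem x j)
        (S.dualIdem F x i *ᵥ (1 : X → F)) (S.vvec_mem x i) (1 : X → F) (S.one_mem x)
      rw [S.dual_transpose x j] at h
      have hE : S.dualIdem F x j *ᵥ (S.dualIdem F x i *ᵥ (1 : X → F))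
          = if j = i then S.dualIdem F x i *ᵥ (1 : X → F) else 0 := by
        funext y
        rcases eq_or_ne j i with rfl | hne
        · rw [if_pos rfl, S.dual_mulVec]
          by_cases hy : S.r x y = j
          · rw [if_pos hy]
          · rw [if_neg hy, S.vvec_apply, if_neg hy]
        · rw [if_neg hne, S.dual_mulVec, Pi.zero_apply]
          by_cases hy : S.r x y = j
          · rw [if_pos hy, S.vvec_apply, if_neg (by rw [hy]; exact hne)]
          · rw [if_neg hy]
      rw [hE] at h
      rcases eq_or_ne j i with rfl | hne
      · rw [if_pos rfl] at h
        rw [← h]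
        exact h1
      · rw [if_neg hne, map_zero, LinearMap.zero_apply] at h
        exact h.symm
    have hall : ∀ w ∈ S.W0 F x, B (S.dualIdem F x i *ᵥ (1 : X → F)) w = 0 := by
      have hle : S.W0 F x ≤ LinearMap.ker (B (S.dualIdem F x i *ᵥ (1 : X → F))) :=
        Submodule.span_le.mpr (by rintro _ ⟨j, rfl⟩; exact hj j)
      intro w hw
      exact LinearMap.mem_ker.mp (hle hw)
    have hzero : S.dualIdem F x i *ᵥ (1 : X → F) = 0 :=
      hnd _ (S.vvec_mem x i) hall
    obtain ⟨y, hy⟩ := S.exists_sphere i x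
    have hone : (S.dualIdem F x i *ᵥ (1 : X → F)) y = 1 := by
      rw [S.vvec_apply, if_pos hy]
    rw [hzero] at hone
    simp at hone

end AssocScheme
end
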